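/- arXiv:1906.11112 — 2 statements merged into one kernel-verified Lean document; each statement's English description precedes it below -/
import Mathlib

section
/- Let I₀ ⊆ ℝ be a bounded interval and K an infinite set of intervals contained in I₀ with inf_{I∈K} μ(I) > 0. Then there exists an infinite subset L ⊆ K and an interval J with μ(J) > 0 such that J ⊆ I for all I ∈ L. -/
open MeasureTheory Pointwise
noncomputable section

/-- Fourier transform of a real-valued function on ℝⁿ (real part; for even
real functions the Fourier transform is real, so this is lossless). -/
def FT {n : ℕ} (f : EuclideanSpace ℝ (Fin n) → ℝ) (ξ : EuclideanSpace ℝ (Fin n)) : ℝ :=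
  (VectorFourier.fourierIntegral Real.fourierChar volume (innerₗ (EuclideanSpace ℝ (Fin n)))
    (fun x => (f x : ℂ)) ξ).re

/-- Membership in the Cohn-Elkies class 𝓕ₙ. -/
def CEAdmissible (n : ℕ) (f : EuclideanSpace ℝ (Fin n) → ℝ) : Prop :=
  (∀ x, f (-x) = f x) ∧ Integrable f ∧ Integrable (FT f) ∧
    f 0 = FT f 0 ∧ 0 < f 0 ∧ (∀ ξ, 0 ≤ FT f ξ) ∧
    ∃ r > 0, ∀ x : EuclideanSpace ℝ (Fin n), r ≤ ‖x‖ → f x ≤ 0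

/-- r(f): the last sign change radius. -/
def rad {n : ℕ} (f : EuclideanSpace ℝ (Fin n) → ℝ) : ℝ :=
  sInf {r : ℝ | ∀ x : EuclideanSpace ℝ (Fin n), r ≤ ‖x‖ → f x ≤ 0}

/-- R(n): the optimal value of the Cohn-Elkies linear program. -/
def Rn (n : ℕ) : ℝ := sInf (rad '' {f : EuclideanSpace ℝ (Fin n) → ℝ | CEAdmissible n f})

def IsRadial {n : ℕ} (f : EuclideanSpace ℝ (Fin n) → ℝ) : Prop :=
  ∀ x y : EuclideanSpace ℝ (Fin n), ‖x‖ = ‖y‖ → f x = f y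

/-- A radial Cohn-Elkies (optimal) function. -/
def IsCohnElkies (n : ℕ) (f : EuclideanSpace ℝ (Fin n) → ℝ) : Prop :=
  CEAdmissible n f ∧ IsRadial f ∧ rad f = Rn n

/-- h = 𝟙_S ⋆ 𝟙_{-S}. -/
def hconv {n : ℕ} (S : Set (EuclideanSpace ℝ (Fin n))) (x : EuclideanSpace ℝ (Fin n)) : ℝ :=
  ∫ t, S.indicator (fun _ => (1:ℝ)) t * (-S).indicator (fun _ => (1:ℝ)) (x - t)

/-! The left endpoints lie in the compact interval `[a, b]`, so infinitely many of them fall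
within `c / 4` of a single point `x`. Each of those intervals starts before `x + c / 4` and,
having length at least `c`, ends after `x + 3c / 4`; so all of them contain
`[x + c / 4, x + 3c / 4]`. -/

theorem TotallyBounded.exists_infinite_inter_preimage_ball {α X : Type*} [PseudoMetricSpace X]
    {s : Set X} (hs : TotallyBounded s) {K : Set α} (hK : K.Infinite) {f : α → X}
    (hf : Set.MapsTo f K s) {ε : ℝ} (hε : 0 < ε) :
    ∃ x, (K ∩ f ⁻¹' Metric.ball x ε).Infinite := by
  obtain ⟨t, ht, hcover⟩ := Metric.totallyBounded_iff.mp hs ε hε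
  by_contra! hfin
  refine hK ((ht.biUnion fun y _ => hfin y).subset fun p hp => ?_)
  obtain ⟨y, hy, hpy⟩ := Set.mem_iUnion₂.mp (hcover (hf hp))
  exact Set.mem_biUnion hy ⟨hp, hpy⟩

theorem stmt13 (a b : ℝ) (K : Set (ℝ × ℝ))
    (hK : K.Infinite)
    (hsub : ∀ p ∈ K, Set.Icc p.1 p.2 ⊆ Set.Icc a b)
    (hlen : ∃ c > (0:ℝ), ∀ p ∈ K, c ≤ p.2 - p.1) :
    ∃ L ⊆ K, L.Infinite ∧ ∃ u v : ℝ, u < v ∧ ∀ p ∈ L, Set.Icc u v ⊆ Set.Icc p.1 p.2 := by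
  obtain ⟨c, hc, hcK⟩ := hlen
  have hfst : Set.MapsTo Prod.fst K (Set.Icc a b) := fun p hp =>
    hsub p hp ⟨le_rfl, by linarith [hcK p hp]⟩
  obtain ⟨x, hx⟩ := isCompact_Icc.totallyBounded.exists_infinite_inter_preimage_ball hK hfst
    (by positivity : 0 < c / 4)
  refine ⟨_, Set.inter_subset_left, hx, x + c / 4, x + 3 * c / 4, by linarith, ?_⟩
  rintro p ⟨hp, hpx⟩
  have hnear : |p.1 - x| < c / 4 := hpx
  have hlong := hcK p hp
  apply Set.Icc_subset_Icc <;> linarith [abs_lt.mp hnear]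
end
end

section
/- Let A ⊆ ℝ and C, c > 0 be such that every closed interval J of length C satisfies: J ∩ A contains a closed interval of length c. Let T ⊆ ℝ be unbounded above and I an interval with μ(I) = C. Then there exists an interval I' ⊆ I with μ(I') > 0 and an unbounded subset T' ⊆ T such that T' − I' ⊆ A. -/
/-! The interval `[t - a - C, t - a]` contains an interval of length `c` inside `A`; equivalently
`t - x ∈ A` for all `x ∈ [s t, s t + c]`, where `s t ∈ [a, a + C - c]`. By compactness the points
`s t` accumulate at some `y` along an unbounded set `T'` of `t ∈ T`, and once `|s t - y| < c / 4`
the interval `[y + c / 4, y + 3c / 4] ⊆ [a, a + C]` lies inside `[s t, s t + c]`. -/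

open MeasureTheory Pointwise
noncomputable section

open Filter

theorem exists_Icc_forall_sub_mem {A : Set ℝ} {C c : ℝ} (hc : 0 ≤ c)
    (hA : ∀ x : ℝ, ∃ u : ℝ, Set.Icc u (u + c) ⊆ Set.Icc x (x + C) ∩ A) (t a : ℝ) :
    ∃ s ∈ Set.Icc a (a + C - c), ∀ x ∈ Set.Icc s (s + c), t - x ∈ A := by
  obtain ⟨u, hu⟩ := hA (t - (a + C))
  have hu_left := (hu (Set.left_mem_Icc.2 (by linarith))).1.1
  have hu_right := (hu (Set.right_mem_Icc.2 (by linarith))).1.2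
  refine ⟨t - u - c, ⟨by linarith, by linarith⟩, fun x hx => (hu ⟨?_, ?_⟩).2⟩
  · linarith [hx.2]
  · linarith [hx.1]

theorem IsCompact.exists_dist_lt_of_unbounded {ι X : Type*} [LinearOrder ι] [Nonempty ι]
    [NoMaxOrder ι] [PseudoMetricSpace X] {K : Set X} (hK : IsCompact K) {T : Set ι}
    (hT : ∀ M : ι, ∃ t ∈ T, M < t) {p : ι → X} (hp : ∀ t ∈ T, p t ∈ K) {ε : ℝ} (hε : 0 < ε) :
    ∃ y ∈ K, ∀ M : ι, ∃ t ∈ T, M < t ∧ dist (p t) y < ε := by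
  have hpK : ∃ᶠ t in atTop ⊓ 𝓟 T, p t ∈ K := by
    rw [frequently_inf_principal, frequently_atTop']
    intro M
    obtain ⟨t, htT, hMt⟩ := hT M
    exact ⟨t, hMt, htT, hp t htT⟩
  obtain ⟨y, hyK, hy⟩ := hK.exists_mapClusterPt_of_frequently hpK
  have hnear := hy.frequently (Metric.ball_mem_nhds y hε)
  rw [frequently_inf_principal, frequently_atTop'] at hnear
  refine ⟨y, hyK, fun M => ?_⟩
  obtain ⟨t, hMt, htT, hty⟩ := hnear M
  exact ⟨t, htT, hMt, hty⟩

theorem stmt14_general (A : Set ℝ) (C c : ℝ) (hc : 0 < c)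
    (hA : ∀ x : ℝ, ∃ u : ℝ, Set.Icc u (u + c) ⊆ Set.Icc x (x + C) ∩ A)
    (T : Set ℝ) (hT : ∀ M : ℝ, ∃ t ∈ T, M < t)
    (a : ℝ) :
    ∃ u v : ℝ, u < v ∧ Set.Icc u v ⊆ Set.Icc a (a + C) ∧
      ∃ T' ⊆ T, (∀ M : ℝ, ∃ t ∈ T', M < t) ∧
        ∀ t ∈ T', ∀ x ∈ Set.Icc u v, t - x ∈ A := by
  choose s hsK hsA using fun t => exists_Icc_forall_sub_mem hc.le hA t a
  obtain ⟨y, hyK, hy⟩ := isCompact_Icc.exists_dist_lt_of_unbounded hT (fun t _ => hsK t)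
    (by positivity : 0 < c / 4)
  refine ⟨y + c / 4, y + 3 * c / 4, by linarith,
    Set.Icc_subset_Icc (by linarith [hyK.1]) (by linarith [hyK.2]),
    {t ∈ T | dist (s t) y < c / 4}, fun t ht => ht.1, fun M => ?_, ?_⟩
  · obtain ⟨t, htT, hMt, hty⟩ := hy M
    exact ⟨t, ⟨htT, hty⟩, hMt⟩
  · rintro t ⟨-, hty⟩ x hx
    rw [Real.dist_eq, abs_sub_lt_iff] at hty
    exact hsA t x ⟨by linarith [hx.1], by linarith [hx.2]⟩

theorem stmt14 (A : Set ℝ) (C c : ℝ) (hC : 0 < C) (hc : 0 < c)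
    (hA : ∀ x : ℝ, ∃ u : ℝ, Set.Icc u (u + c) ⊆ Set.Icc x (x + C) ∩ A)
    (T : Set ℝ) (hT : ∀ M : ℝ, ∃ t ∈ T, M < t)
    (a : ℝ) :
    ∃ u v : ℝ, u < v ∧ Set.Icc u v ⊆ Set.Icc a (a + C) ∧
      ∃ T' ⊆ T, (∀ M : ℝ, ∃ t ∈ T', M < t) ∧
        ∀ t ∈ T', ∀ x ∈ Set.Icc u v, t - x ∈ A :=
  stmt14_general A C c hc hA T hT a
end
end
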